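/- arXiv:math/9503214 — 2 statements merged into one kernel-verified Lean document; each statement's English description precedes it below -/
import Mathlib

section
/- Let V be a closed convex subset of ℝ with γ₁(V) ≥ 1/2, let θ satisfy γ₁([−θ/2, θ/2]) = 1/2, and let L = dℤ be a lattice in ℝ with 0 < d ≤ θ. Then for every a ∈ ℝ, (a + L) ∩ V ≠ ∅. -/
open MeasureTheory Real

/-- Standard Gaussian measure on ℝⁿ (as Euclidean space). -/
noncomputable def stdGaussian (n : ℕ) : Measure (EuclideanSpace ℝ (Fin n)) :=
  volume.withDensity fun x => ENNReal.ofReal ((2 * π) ^ (-(n : ℝ) / 2) * Real.exp (-‖x‖ ^ 2 / 2))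

/-- Standard Gaussian measure on ℝ. -/
noncomputable def gaussian1 : Measure ℝ :=
  volume.withDensity fun x => ENNReal.ofReal ((2 * π) ^ (-(1 : ℝ) / 2) * Real.exp (-x ^ 2 / 2))

/-!
If `V` misses `a + dℤ`, then `V`, a closed interval, lies strictly between two consecutive
points of `a + dℤ`, so it is contained in a closed interval of length `< d ≤ θ`. Since the
Gaussian density is even and decreasing in `|x|`, an interval of given length has the largest
Gaussian measure when it is centred at `0`; as the measure of `[-h, h]` increases strictly with
`h`, this gives `γ₁(V) < γ₁([-θ/2, θ/2]) = 1/2`.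
-/

open ProbabilityTheory Set

namespace ProbabilityTheory

lemma continuous_gaussianPDFReal (μ : ℝ) (v : NNReal) : Continuous (gaussianPDFReal μ v) := by
  unfold gaussianPDFReal
  fun_prop

lemma gaussianPDFReal_le_of_sq_le {μ : ℝ} {v : NNReal} {x y : ℝ}
    (h : (y - μ) ^ 2 ≤ (x - μ) ^ 2) :
    gaussianPDFReal μ v x ≤ gaussianPDFReal μ v y := by
  unfold gaussianPDFReal
  gcongr

end ProbabilityTheory

lemma gaussian1_eq_gaussianReal : gaussian1 = gaussianReal 0 1 := by
  rw [gaussianReal_of_var_ne_zero _ one_ne_zero, gaussian1]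
  congr 1
  ext x
  simp only [gaussianPDF, gaussianPDFReal, NNReal.coe_one, mul_one, sub_zero, neg_div,
    rpow_neg (by positivity : (0 : ℝ) ≤ 2 * π), sqrt_eq_rpow, one_div]

local notation "φ" => gaussianPDFReal 0 1

noncomputable def gaussianPrimitive (x : ℝ) : ℝ := ∫ t in (0 : ℝ)..x, φ t

lemma hasDerivAt_gaussianPrimitive (x : ℝ) : HasDerivAt gaussianPrimitive (φ x) x :=
  ((continuous_gaussianPDFReal 0 1).integral_hasStrictDerivAt 0 x).hasDerivAt

lemma strictMono_gaussianPrimitive : StrictMono gaussianPrimitive :=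
  strictMono_of_hasDerivAt_pos hasDerivAt_gaussianPrimitive
    fun x => gaussianPDFReal_pos _ _ x one_ne_zero

lemma gaussian1_Icc (p q : ℝ) :
    gaussian1 (Icc p q) = ENNReal.ofReal (gaussianPrimitive q - gaussianPrimitive p) := by
  rcases le_or_gt p q with hpq | hqp
  · rw [gaussian1_eq_gaussianReal, gaussianReal_apply_eq_integral _ one_ne_zero,
      integral_Icc_eq_integral_Ioc, ← intervalIntegral.integral_of_le hpq, gaussianPrimitive,
      gaussianPrimitive, intervalIntegral.integral_interval_sub_left
        ((continuous_gaussianPDFReal 0 1).intervalIntegrable _ _)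
        ((continuous_gaussianPDFReal 0 1).intervalIntegrable _ _)]
  · rw [Icc_eq_empty hqp.not_ge, measure_empty,
      ENNReal.ofReal_eq_zero.2 (sub_nonpos.2 (strictMono_gaussianPrimitive hqp).le)]

lemma gaussianPrimitive_sub_le_centered (m h : ℝ) (hh : 0 ≤ h) :
    gaussianPrimitive (m + h) - gaussianPrimitive (m - h) ≤
      gaussianPrimitive h - gaussianPrimitive (-h) := by
  set g := fun m => gaussianPrimitive (m + h) - gaussianPrimitive (m - h)
  have hg (m : ℝ) : HasDerivAt g (φ (m + h) - φ (m - h)) m :=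
    ((hasDerivAt_gaussianPrimitive _).comp_add_const m h).sub
      ((hasDerivAt_gaussianPrimitive _).comp_sub_const m h)
  have hg_cont : Continuous g := continuous_iff_continuousAt.2 fun m => (hg m).continuousAt
  suffices g m ≤ g 0 by simpa [g] using this
  rcases le_total 0 m with hm | hm
  · refine antitoneOn_of_hasDerivWithinAt_nonpos (convex_Ici 0) hg_cont.continuousOn
      (fun x _ => (hg x).hasDerivWithinAt) (fun x hx => ?_) self_mem_Ici hm hm
    rw [interior_Ici] at hx
    exact sub_nonpos.2 (gaussianPDFReal_le_of_sq_le (by nlinarith [hx.out]))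
  · refine monotoneOn_of_hasDerivWithinAt_nonneg (convex_Iic 0) hg_cont.continuousOn
      (fun x _ => (hg x).hasDerivWithinAt) (fun x hx => ?_) hm self_mem_Iic hm
    rw [interior_Iic] at hx
    exact sub_nonneg.2 (gaussianPDFReal_le_of_sq_le (by nlinarith [hx.out]))

lemma gaussian1_Icc_lt_centered {p q θ : ℝ} (hpq : p ≤ q) (hθ : q - p < θ) :
    gaussian1 (Icc p q) < gaussian1 (Icc (-(θ / 2)) (θ / 2)) := by
  have hmono := strictMono_gaussianPrimitive
  have hcentered := gaussianPrimitive_sub_le_centered ((p + q) / 2) ((q - p) / 2) (by linarith)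
  rw [show (p + q) / 2 + (q - p) / 2 = q by ring, show (p + q) / 2 - (q - p) / 2 = p by ring]
    at hcentered
  rw [gaussian1_Icc, gaussian1_Icc, ENNReal.ofReal_lt_ofReal_iff (sub_pos.2 (hmono (by linarith)))]
  have := hmono (show (q - p) / 2 < θ / 2 by linarith)
  have := hmono (show -(θ / 2) < -((q - p) / 2) by linarith)
  linarith

lemma Set.OrdConnected.exists_subset_Ioo_of_forall_notMem {V : Set ℝ} (hV : V.OrdConnected)
    (hne : V.Nonempty) {a d : ℝ} (hd : 0 < d) (hmiss : ∀ k : ℤ, a + d * k ∉ V) :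
    ∃ c, V ⊆ Ioo c (c + d) := by
  obtain ⟨x, hx⟩ := hne
  set k := ⌊(x - a) / d⌋
  have hkx : a + d * k ≤ x := by
    have := Int.floor_le ((x - a) / d)
    rw [le_div_iff₀ hd] at this
    linarith
  have hxk : x < a + d * k + d := by
    have := Int.lt_floor_add_one ((x - a) / d)
    rw [div_lt_iff₀ hd] at this
    linarith
  refine ⟨a + d * k, fun y hy => ⟨?_, ?_⟩⟩
  · by_contra! hyk
    exact hmiss k (hV.out hy hx ⟨hyk, hkx⟩)
  · by_contra! hky
    exact hmiss (k + 1) (hV.out hx hy ⟨by push_cast; linarith, by push_cast; linarith⟩)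

lemma IsClosed.exists_subset_Icc_of_subset_Ioo {V : Set ℝ} (hV : IsClosed V) (hne : V.Nonempty)
    {c e : ℝ} (hsub : V ⊆ Ioo c e) : ∃ p q, c < p ∧ q < e ∧ V ⊆ Icc p q := by
  have hp := hV.csInf_mem hne (bddBelow_Ioo.mono hsub)
  have hq := hV.csSup_mem hne (bddAbove_Ioo.mono hsub)
  exact ⟨sInf V, sSup V, (hsub hp).1, (hsub hq).2,
    subset_Icc_csInf_csSup (bddBelow_Ioo.mono hsub) (bddAbove_Ioo.mono hsub)⟩

theorem stmt_6_general (V : Set ℝ) (hVclosed : IsClosed V) (hVconv : Convex ℝ V)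
    (hV : gaussian1 V ≥ 1 / 2) (θ d : ℝ)
    (hθ : gaussian1 (Set.Icc (-(θ / 2)) (θ / 2)) = 1 / 2)
    (hd : 0 < d) (hdθ : d ≤ θ) (a : ℝ) :
    ∃ k : ℤ, a + d * k ∈ V := by
  by_contra! hmiss
  have hne : V.Nonempty :=
    nonempty_of_measure_ne_zero ((by norm_num : (0 : ENNReal) < 1 / 2).trans_le hV).ne'
  obtain ⟨c, hc⟩ := hVconv.ordConnected.exists_subset_Ioo_of_forall_notMem hne hd hmiss
  obtain ⟨p, q, hcp, hqc, hVpq⟩ := hVclosed.exists_subset_Icc_of_subset_Ioo hne hc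
  have hpq : p ≤ q := nonempty_Icc.1 (hne.mono hVpq)
  have hlt : gaussian1 V < 1 / 2 := calc
    gaussian1 V ≤ gaussian1 (Icc p q) := measure_mono hVpq
    _ < gaussian1 (Icc (-(θ / 2)) (θ / 2)) := gaussian1_Icc_lt_centered hpq (by linarith)
    _ = 1 / 2 := hθ
  exact hlt.not_ge hV

theorem stmt_6 (V : Set ℝ) (hVclosed : IsClosed V) (hVconv : Convex ℝ V)
    (hV : gaussian1 V ≥ 1 / 2) (θ d : ℝ) (hθpos : 0 < θ)
    (hθ : gaussian1 (Set.Icc (-(θ / 2)) (θ / 2)) = 1 / 2)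
    (hd : 0 < d) (hdθ : d ≤ θ) (a : ℝ) :
    ∃ k : ℤ, a + d * k ∈ V :=
  stmt_6_general V hVclosed hVconv hV θ d hθ hd hdθ a
end

section
/- There is a constant C > 0 such that for all n ≥ 2, for every lattice L in ℝⁿ, μ(L, Kₙ) ≤ C √(log n) · λₙ(L, Bₙ), where Kₙ = [−1,1]ⁿ is the unit cube; i.e., α(Bₙ, Kₙ) = O(√(log n)) as n → ∞. -/
/-!
Randomized Babai rounding. Pick linearly independent lattice vectors `v₁, …, vₙ` of length at most
`r` (any `r` above `λₙ`), with Gram–Schmidt vectors `gᵢ`, and round `t = ∑ aᵢ vᵢ` one coefficient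
at a time, starting from the last, replacing `aₖ` by `⌊aₖ⌋` or `⌊aₖ⌋ + 1` at random so that the
error has mean zero. By Hoeffding's lemma each step adds a sub-Gaussian error along `gₖ`, so the
random lattice point `X` satisfies `𝔼 exp φ(t - X) ≤ exp (∑ φ(gᵢ)² / 8)` for every linear functional
`φ`, and Bessel's inequality gives `∑ ⟪gᵢ, eⱼ⟫² ≤ r²`. A union bound over the `2n` functionals
`± eⱼ` then yields a lattice point with `‖t - X‖_∞ ≤ (r / 2) √(2 log 2n) ≤ r √(log n)`.
-/

open MeasureTheory Real

open Pointwise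

/-- The n-th minimum of a lattice `L` with respect to a set `U`. -/
noncomputable def nthMin (n : ℕ) (L : AddSubgroup (EuclideanSpace ℝ (Fin n)))
    (U : Set (EuclideanSpace ℝ (Fin n))) : ℝ :=
  sInf {r : ℝ | 0 < r ∧
    Module.finrank ℝ (Submodule.span ℝ ((L : Set (EuclideanSpace ℝ (Fin n))) ∩ r • U)) = n}

/-- The covering radius of a lattice `L` with respect to a set `V`. -/
noncomputable def covRad (n : ℕ) (L : AddSubgroup (EuclideanSpace ℝ (Fin n)))
    (V : Set (EuclideanSpace ℝ (Fin n))) : ℝ :=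
  sInf {r : ℝ | 0 < r ∧ (L : Set (EuclideanSpace ℝ (Fin n))) + r • V = Set.univ}


open Module Submodule InnerProductSpace

section Rounding

variable {E : Type*} [AddCommGroup E] [Module ℝ E]

/-- Hoeffding's lemma for the centred two-point distribution taking the value `c` with probability
`1 - c` and `c - 1` with probability `c`. -/
theorem two_point_mgf_le {c : ℝ} (hc₀ : 0 ≤ c) (hc₁ : c ≤ 1) (y : ℝ) :
    (1 - c) * exp (c * y) + c * exp ((c - 1) * y) ≤ exp (y ^ 2 / 8) := by
  set μ : Measure ℝ :=
    ENNReal.ofReal (1 - c) • Measure.dirac c + ENNReal.ofReal c • Measure.dirac (c - 1)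
  have : IsProbabilityMeasure μ :=
    ⟨by simp [μ, ← ENNReal.ofReal_add (sub_nonneg.2 hc₁) hc₀]⟩
  have hint (f : ℝ → ℝ) : ∫ x, f x ∂μ = (1 - c) * f c + c * f (c - 1) := by
    rw [integral_add_measure, integral_smul_measure, integral_smul_measure, integral_dirac,
      integral_dirac, ENNReal.toReal_ofReal (sub_nonneg.2 hc₁), ENNReal.toReal_ofReal hc₀,
      smul_eq_mul, smul_eq_mul]
    all_goals exact (integrable_dirac (by simp)).smul_measure (by simp)
  have hsupp : ∀ᵐ x ∂μ, x ∈ Set.Icc (c - 1) c :=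
    ae_add_measure_iff.2
      ⟨Measure.ae_smul_measure ((ae_dirac_iff measurableSet_Icc).2 (by simp)) _,
        Measure.ae_smul_measure ((ae_dirac_iff measurableSet_Icc).2 (by simp)) _⟩
  have h := (ProbabilityTheory.hasSubgaussianMGF_of_mem_Icc_of_integral_eq_zero
    aemeasurable_id hsupp (by rw [hint]; simp only [id]; ring)).mgf_le y
  rw [ProbabilityTheory.mgf, hint] at h
  simp only [id, mul_comm y] at h
  convert h using 2
  norm_num [sub_sub_cancel]
  ring

theorem exists_le_of_sum_mul_le {ι : Type*} [Fintype ι] {w f : ι → ℝ} {B : ℝ}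
    (hw : ∀ i, 0 ≤ w i) (hs : ∑ i, w i = 1) (h : ∑ i, w i * f i ≤ B) : ∃ i, f i ≤ B := by
  have : Nonempty ι := by
    by_contra hι
    simp [not_nonempty_iff.1 hι] at hs
  obtain ⟨i₀, hi₀⟩ := Finite.exists_min f
  refine ⟨i₀, ?_⟩
  calc f i₀ = ∑ i, w i * f i₀ := by rw [← Finset.sum_mul, hs, one_mul]
    _ ≤ ∑ i, w i * f i := Finset.sum_le_sum fun i _ => mul_le_mul_of_nonneg_left (hi₀ i) (hw i)
    _ ≤ B := h

/-- There is a finitely supported random point `X` of `L` (value `x i` with probability `w i`)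
such that `t - X` is sub-Gaussian with variance proxy `V φ` in every direction `φ`. -/
def HasSubgaussianRounding (L : AddSubgroup E) (V : (E →ₗ[ℝ] ℝ) → ℝ) (t : E) : Prop :=
  ∃ (ι : Type) (_ : Fintype ι) (w : ι → ℝ) (x : ι → L), (∀ i, 0 ≤ w i) ∧ ∑ i, w i = 1 ∧
    ∀ φ : E →ₗ[ℝ] ℝ, ∑ i, w i * exp (φ (t - x i)) ≤ exp (V φ / 2)

theorem hasSubgaussianRounding_of_mem {L : AddSubgroup E} {t : E} (ht : t ∈ L) :
    HasSubgaussianRounding L (fun _ => 0) t :=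
  ⟨Unit, inferInstance, 1, fun _ => ⟨t, ht⟩, fun _ => zero_le_one, by simp, fun φ => by simp⟩

theorem HasSubgaussianRounding.of_two_point {L : AddSubgroup E} {V : (E →ₗ[ℝ] ℝ) → ℝ}
    {t x₀ x₁ u : E} {c : ℝ} (hc₀ : 0 ≤ c) (hc₁ : c ≤ 1) (hx₀ : x₀ ∈ L) (hx₁ : x₁ ∈ L)
    (h₀ : HasSubgaussianRounding L V (t - x₀ - c • u))
    (h₁ : HasSubgaussianRounding L V (t - x₁ - (c - 1) • u)) :
    HasSubgaussianRounding L (fun φ => V φ + φ u ^ 2 / 4) t := by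
  obtain ⟨ι₀, _, w₀, y₀, hw₀, hs₀, hb₀⟩ := h₀
  obtain ⟨ι₁, _, w₁, y₁, hw₁, hs₁, hb₁⟩ := h₁
  refine ⟨ι₀ ⊕ ι₁, inferInstance, Sum.elim ((1 - c) * w₀ ·) (c * w₁ ·),
    Sum.elim (⟨x₀, hx₀⟩ + y₀ ·) (⟨x₁, hx₁⟩ + y₁ ·), ?_, ?_, fun φ => ?_⟩
  · rintro (i | i)
    · exact mul_nonneg (sub_nonneg.2 hc₁) (hw₀ i)
    · exact mul_nonneg hc₀ (hw₁ i)
  · simp [Fintype.sum_sum_type, ← Finset.mul_sum, hs₀, hs₁]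
  have hsplit (x y : E) (a : ℝ) :
      exp (φ (t - (x + y))) = exp (a * φ u) * exp (φ (t - x - a • u - y)) := by
    rw [← exp_add, ← smul_eq_mul, ← map_smul, ← map_add]
    congr 2
    abel
  calc ∑ i, Sum.elim ((1 - c) * w₀ ·) (c * w₁ ·) i *
          exp (φ (t - (Sum.elim (⟨x₀, hx₀⟩ + y₀ ·) (⟨x₁, hx₁⟩ + y₁ ·) i : L)))
      = (1 - c) * exp (c * φ u) * ∑ i, w₀ i * exp (φ (t - x₀ - c • u - y₀ i)) +
          c * exp ((c - 1) * φ u) * ∑ i, w₁ i * exp (φ (t - x₁ - (c - 1) • u - y₁ i)) := by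
        simp only [Fintype.sum_sum_type, Sum.elim_inl, Sum.elim_inr, AddSubgroup.coe_add,
          Finset.mul_sum]
        congr 1
        · exact Finset.sum_congr rfl fun _ _ => by rw [hsplit _ _ c]; ring
        · exact Finset.sum_congr rfl fun _ _ => by rw [hsplit _ _ (c - 1)]; ring
    _ ≤ (1 - c) * exp (c * φ u) * exp (V φ / 2) + c * exp ((c - 1) * φ u) * exp (V φ / 2) := by
        have := sub_nonneg.2 hc₁
        gcongr
        exacts [hb₀ φ, hb₁ φ]
    _ ≤ exp (φ u ^ 2 / 8) * exp (V φ / 2) := by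
        rw [← add_mul]
        gcongr
        exact two_point_mgf_le hc₀ hc₁ _
    _ = exp ((V φ + φ u ^ 2 / 4) / 2) := by
        rw [← exp_add]
        ring_nf

/-- Randomized Babai rounding: the last coefficient `a` of `t` along `v` is rounded to `⌊a⌋` or
`⌊a⌋ + 1` so that the error has mean zero, and the remainder, which lies in the span of the earlier
vectors, is rounded recursively. -/
theorem hasSubgaussianRounding_of_mem_span (L : AddSubgroup E) :
    ∀ {k : ℕ} (v g : Fin k → E), (∀ i, v i ∈ L) → (∀ i, v i - g i ∈ span ℝ (v '' Set.Iio i)) →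
      ∀ t ∈ span ℝ (Set.range v), HasSubgaussianRounding L (fun φ => ∑ i, φ (g i) ^ 2 / 4) t
  | 0, v, g, _, _, t, ht => by
    obtain ⟨a, rfl⟩ := (mem_span_range_iff_exists_fun ℝ).1 ht
    simpa using hasSubgaussianRounding_of_mem (zero_mem L)
  | k + 1, v, g, hvL, hvg, t, ht => by
    set v' : Fin k → E := fun i => v i.castSucc
    have hv'g (i : Fin k) : v' i - g i.castSucc ∈ span ℝ (v' '' Set.Iio i) := by
      simpa [v', ← Fin.image_castSucc_Iio, Set.image_image] using hvg i.castSucc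
    have hrec := hasSubgaussianRounding_of_mem_span L v' (fun i => g i.castSucc)
      (fun i => hvL _) hv'g
    obtain ⟨a, rfl⟩ := (mem_span_range_iff_exists_fun ℝ).1 ht
    set w := v (Fin.last k)
    set u := g (Fin.last k)
    set z : E := ∑ i : Fin k, a i.castSucc • v' i
    have hsum : ∑ i, a i • v i = z + a (Fin.last k) • w := Fin.sum_univ_castSucc _
    have hz : z ∈ span ℝ (Set.range v') := (mem_span_range_iff_exists_fun ℝ).2 ⟨_, rfl⟩
    have hwu : w - u ∈ span ℝ (Set.range v') := by
      refine span_mono ?_ (hvg (Fin.last k))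
      rintro _ ⟨j, hj, rfl⟩
      obtain ⟨j', rfl⟩ := Fin.exists_castSucc_eq.2 (ne_of_lt hj)
      exact ⟨j', rfl⟩
    set m := ⌊a (Fin.last k)⌋
    set c := Int.fract (a (Fin.last k))
    have hc : c = a (Fin.last k) - m := (Int.self_sub_floor _).symm
    have hmem (p : ℤ) : (p : ℝ) • w ∈ L := by
      rw [Int.cast_smul_eq_zsmul]
      exact zsmul_mem (hvL _) p
    have ht₀ : ∑ i, a i • v i - (m : ℝ) • w - c • u ∈ span ℝ (Set.range v') := by
      convert add_mem hz (smul_mem _ c hwu) using 1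
      rw [hsum, hc]
      module
    have ht₁ : ∑ i, a i • v i - ((m + 1 : ℤ) : ℝ) • w - (c - 1) • u ∈ span ℝ (Set.range v') := by
      convert add_mem hz (smul_mem _ (c - 1) hwu) using 1
      rw [hsum, hc]
      push_cast
      module
    simpa [Fin.sum_univ_castSucc] using HasSubgaussianRounding.of_two_point (Int.fract_nonneg _)
      (Int.fract_lt_one _).le (hmem m) (hmem (m + 1)) (hrec _ ht₀) (hrec _ ht₁)

/-- Union bound over the `2 |J|` directions `± s • ψ j`, through the exponential moment. -/
theorem HasSubgaussianRounding.exists_forall_abs_mul_le {L : AddSubgroup E}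
    {V : (E →ₗ[ℝ] ℝ) → ℝ} {t : E} {J : Type*} [Fintype J] (ψ : J → E →ₗ[ℝ] ℝ) {σ : ℝ}
    (hV : ∀ j (s : ℝ), V (s • ψ j) ≤ s ^ 2 * σ ^ 2) (h : HasSubgaussianRounding L V t) (s : ℝ) :
    ∃ x ∈ L, ∀ j, |s * ψ j (t - x)| ≤ log (2 * Fintype.card J) + s ^ 2 * σ ^ 2 / 2 := by
  obtain ⟨ι, _, w, x, hw, hs, hb⟩ := h
  set B := exp (s ^ 2 * σ ^ 2 / 2)
  have hmgf (j : J) (s' : ℝ) (hs' : s' ^ 2 = s ^ 2) :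
      ∑ i, w i * exp ((s' • ψ j) (t - x i)) ≤ B := by
    refine (hb _).trans (exp_le_exp.2 ?_)
    have := hV j s'
    rw [hs'] at this
    linarith
  set F : E → ℝ := fun y => ∑ j, (exp ((s • ψ j) y) + exp (((-s) • ψ j) y))
  have hF : ∑ i, w i * F (t - x i) ≤ 2 * Fintype.card J * B :=
    calc ∑ i, w i * F (t - x i)
        = ∑ j, (∑ i, w i * exp ((s • ψ j) (t - x i)) +
            ∑ i, w i * exp (((-s) • ψ j) (t - x i))) := by
          simp only [F, Finset.mul_sum, mul_add, Finset.sum_add_distrib]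
          rw [Finset.sum_comm, Finset.sum_comm (γ := ι)]
      _ ≤ ∑ _j : J, (B + B) := by
          gcongr with j
          exacts [hmgf j s rfl, hmgf j (-s) (neg_sq s)]
      _ = 2 * Fintype.card J * B := by
          rw [Finset.sum_const, Finset.card_univ, nsmul_eq_mul]
          ring
  obtain ⟨i, hi⟩ := exists_le_of_sum_mul_le hw hs hF
  refine ⟨x i, (x i).2, fun j => ?_⟩
  have hJ : (0 : ℝ) < 2 * Fintype.card J := by
    have := Fintype.card_pos_iff.2 ⟨j⟩
    positivity
  have hexp : exp |s * ψ j (t - x i)| ≤ 2 * Fintype.card J * B :=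
    calc exp |s * ψ j (t - x i)|
        ≤ exp ((s • ψ j) (t - x i)) + exp (((-s) • ψ j) (t - x i)) := by
          simpa using exp_abs_le (s * ψ j (t - x i))
      _ ≤ F (t - x i) :=
          Finset.single_le_sum (f := fun j => exp ((s • ψ j) (t - x i)) +
            exp (((-s) • ψ j) (t - x i))) (fun _ _ => by positivity) (Finset.mem_univ j)
      _ ≤ _ := hi
  calc |s * ψ j (t - x i)| = log (exp |s * ψ j (t - x i)|) := (log_exp _).symm
    _ ≤ log (2 * Fintype.card J * B) := log_le_log (exp_pos _) hexp
    _ = _ := by rw [log_mul hJ.ne' (exp_pos _).ne', log_exp]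

theorem HasSubgaussianRounding.exists_forall_abs_le {L : AddSubgroup E} {V : (E →ₗ[ℝ] ℝ) → ℝ}
    {t : E} {J : Type*} [Fintype J] [Nonempty J] (ψ : J → E →ₗ[ℝ] ℝ) {σ : ℝ} (hσ : 0 < σ)
    (hV : ∀ j (s : ℝ), V (s • ψ j) ≤ s ^ 2 * σ ^ 2) (h : HasSubgaussianRounding L V t) :
    ∃ x ∈ L, ∀ j, |ψ j (t - x)| ≤ σ * √(2 * log (2 * Fintype.card J)) := by
  set ℓ := log (2 * Fintype.card J)
  have hℓ : 0 < ℓ := log_pos (by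
    have := Fintype.card_pos (α := J)
    norm_cast
    omega)
  set s := √(2 * ℓ) / σ
  have hs : 0 < s := by positivity
  obtain ⟨x, hx, hxj⟩ := h.exists_forall_abs_mul_le ψ hV s
  refine ⟨x, hx, fun j => le_of_mul_le_mul_left ?_ hs⟩
  have hsσ : s * σ = √(2 * ℓ) := div_mul_cancel₀ _ hσ.ne'
  have hsq : √(2 * ℓ) ^ 2 = 2 * ℓ := sq_sqrt (by positivity)
  calc s * |ψ j (t - x)| = |s * ψ j (t - x)| := by rw [abs_mul, abs_of_pos hs]
    _ ≤ ℓ + (s * σ) ^ 2 / 2 := by rw [mul_pow]; exact hxj j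
    _ = s * (σ * √(2 * ℓ)) := by rw [← mul_assoc, hsσ, hsq, mul_self_sqrt (by positivity)]; ring

end Rounding

section GramSchmidt

variable {𝕜 F ι : Type*} [RCLike 𝕜] [NormedAddCommGroup F] [InnerProductSpace 𝕜 F]
  [LinearOrder ι] [LocallyFiniteOrderBot ι] [WellFoundedLT ι]

theorem sub_gramSchmidt_mem_span (f : ι → F) (i : ι) :
    f i - gramSchmidt 𝕜 f i ∈ span 𝕜 (f '' Set.Iio i) := by
  rw [← span_gramSchmidt_Iio, gramSchmidt_def'' 𝕜 f i, add_sub_cancel_left]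
  exact sum_mem fun j hj => smul_mem _ _ (subset_span ⟨j, Finset.mem_Iio.1 hj, rfl⟩)

theorem norm_gramSchmidt_le (f : ι → F) (i : ι) : ‖gramSchmidt 𝕜 f i‖ ≤ ‖f i‖ := by
  have h : inner 𝕜 (gramSchmidt 𝕜 f i) (f i) = (‖gramSchmidt 𝕜 f i‖ : 𝕜) ^ 2 := by
    conv_lhs => rw [gramSchmidt_def'' 𝕜 f i]
    rw [inner_add_right, inner_self_eq_norm_sq_to_K, inner_sum, add_eq_left]
    refine Finset.sum_eq_zero fun j hj => ?_
    rw [inner_smul_right, gramSchmidt_orthogonal 𝕜 f (Finset.mem_Iio.1 hj).ne', mul_zero]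
  have := norm_inner_le_norm (𝕜 := 𝕜) (gramSchmidt 𝕜 f i) (f i)
  rw [h, norm_pow, RCLike.norm_ofReal, abs_norm] at this
  nlinarith [norm_nonneg (gramSchmidt 𝕜 f i), norm_nonneg (f i)]

end GramSchmidt

theorem sum_inner_gramSchmidt_sq_le {F ι : Type*} [NormedAddCommGroup F] [InnerProductSpace ℝ F]
    [LinearOrder ι] [LocallyFiniteOrderBot ι] [WellFoundedLT ι] [Fintype ι] {f : ι → F}
    (hf : LinearIndependent ℝ f) {r : ℝ} (hr : ∀ i, ‖f i‖ ≤ r) (x : F) :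
    ∑ i, inner ℝ (gramSchmidt ℝ f i) x ^ 2 ≤ r ^ 2 * ‖x‖ ^ 2 := by
  have hnormed (i : ι) : inner ℝ (gramSchmidt ℝ f i) x =
      ‖gramSchmidt ℝ f i‖ * inner ℝ (gramSchmidtNormed ℝ f i) x := by
    rw [gramSchmidtNormed, real_inner_smul_left, RCLike.ofReal_real_eq_id, id, ← mul_assoc,
      mul_inv_cancel₀ (norm_ne_zero_iff.2 (gramSchmidt_ne_zero i hf)), one_mul]
  have hbessel := (gramSchmidtNormed_orthonormal hf).sum_inner_products_le (s := Finset.univ) x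
  simp only [Real.norm_eq_abs, sq_abs] at hbessel
  calc ∑ i, inner ℝ (gramSchmidt ℝ f i) x ^ 2
      = ∑ i, ‖gramSchmidt ℝ f i‖ ^ 2 * inner ℝ (gramSchmidtNormed ℝ f i) x ^ 2 := by
        simp only [hnormed, mul_pow]
    _ ≤ ∑ i, r ^ 2 * inner ℝ (gramSchmidtNormed ℝ f i) x ^ 2 := by
        gcongr with i
        exact (norm_gramSchmidt_le f i).trans (hr i)
    _ = r ^ 2 * ∑ i, inner ℝ (gramSchmidtNormed ℝ f i) x ^ 2 := (Finset.mul_sum ..).symm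
    _ ≤ r ^ 2 * ‖x‖ ^ 2 := by gcongr

theorem exists_linearIndependent_fin_of_finrank_span_eq {K V : Type*} [DivisionRing K]
    [AddCommGroup V] [Module K V] [FiniteDimensional K V] {s : Set V} {n : ℕ}
    (h : finrank K (span K s) = n) : ∃ v : Fin n → V, LinearIndependent K v ∧ ∀ i, v i ∈ s := by
  obtain ⟨b, hbs, hspan, hli⟩ := exists_linearIndependent K s
  have := hli.setFinite.fintype
  have hcard : Fintype.card b = n := by
    rw [← h, ← hspan, finrank_span_set_eq_card hli, Set.toFinset_card]
  let e := (Fintype.equivFinOfCardEq hcard).symm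
  exact ⟨fun i => e i, hli.comp e e.injective, fun i => hbs (e i).2⟩

section Lattice

variable {n : ℕ} {L : AddSubgroup (EuclideanSpace ℝ (Fin n))}

theorem exists_finrank_span_inter_smul_closedBall_eq {b : Fin n → EuclideanSpace ℝ (Fin n)}
    (hb : LinearIndependent ℝ b) (hbL : ∀ i, b i ∈ L) :
    ∃ r : ℝ, 0 < r ∧ finrank ℝ (span ℝ
      ((L : Set (EuclideanSpace ℝ (Fin n))) ∩ r • Metric.closedBall 0 1)) = n := by
  refine ⟨∑ i, ‖b i‖ + 1, by positivity, ?_⟩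
  have hsub : Set.range b ⊆ L ∩ (∑ i, ‖b i‖ + 1) • Metric.closedBall 0 1 := by
    rintro _ ⟨i, rfl⟩
    refine ⟨hbL i, ?_⟩
    rw [smul_unitClosedBall_of_nonneg (by positivity), mem_closedBall_zero_iff]
    linarith [Finset.single_le_sum (fun j _ => norm_nonneg (b j)) (Finset.mem_univ i)]
  have hspan := hb.span_eq_top_of_card_eq_finrank' (by simp)
  rw [eq_top_iff.2 (hspan.ge.trans (span_mono hsub)), finrank_top, finrank_euclideanSpace_fin]

theorem covRad_cube_le {R : ℝ} (hR : 0 < R) (h : ∀ t, ∃ x ∈ L, ∀ j, |(t - x) j| ≤ R) :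
    covRad n L {x | ∀ i, |x i| ≤ 1} ≤ R := by
  refine csInf_le ⟨0, fun _ hr => hr.1.le⟩ ⟨hR, Set.eq_univ_of_forall fun t => ?_⟩
  obtain ⟨x, hx, hxt⟩ := h t
  refine Set.mem_add.2 ⟨x, hx, t - x,
    (Set.mem_smul_set_iff_inv_smul_mem₀ hR.ne' _ _).2 fun j => ?_, add_sub_cancel _ _⟩
  rw [PiLp.smul_apply, smul_eq_mul, abs_mul, abs_inv, abs_of_pos hR, inv_mul_le_one₀ hR]
  exact hxt j

theorem covRad_cube_le_sqrt_log_mul (hn : 2 ≤ n) {v : Fin n → EuclideanSpace ℝ (Fin n)}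
    (hv : LinearIndependent ℝ v) (hvL : ∀ i, v i ∈ L) {r : ℝ} (hr : 0 < r)
    (hvr : ∀ i, ‖v i‖ ≤ r) :
    covRad n L {x | ∀ i, |x i| ≤ 1} ≤ √(log n) * r := by
  have : Nonempty (Fin n) := ⟨⟨0, by omega⟩⟩
  have hn' : (2 : ℝ) ≤ n := by exact_mod_cast hn
  have hlog : 0 < log n := log_pos (by linarith)
  refine covRad_cube_le (by positivity) fun t => ?_
  have ht : t ∈ span ℝ (Set.range v) := by
    rw [hv.span_eq_top_of_card_eq_finrank' (by simp)]
    trivial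
  have hV (j : Fin n) (s : ℝ) :
      ∑ i, ((s • EuclideanSpace.projₗ j) (gramSchmidt ℝ v i)) ^ 2 / 4 ≤ s ^ 2 * (r / 2) ^ 2 := by
    have hcol := sum_inner_gramSchmidt_sq_le hv hvr (EuclideanSpace.single j (1 : ℝ))
    simp only [EuclideanSpace.inner_single_right, PiLp.norm_single] at hcol
    calc ∑ i, ((s • EuclideanSpace.projₗ j) (gramSchmidt ℝ v i)) ^ 2 / 4
        = s ^ 2 / 4 * ∑ i, (gramSchmidt ℝ v i j) ^ 2 := by
          rw [Finset.mul_sum]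
          refine Finset.sum_congr rfl fun i _ => ?_
          simp only [LinearMap.smul_apply, smul_eq_mul, PiLp.projₗ_apply]
          ring
      _ ≤ s ^ 2 / 4 * r ^ 2 := by
          gcongr
          simpa using hcol
      _ = s ^ 2 * (r / 2) ^ 2 := by ring
  obtain ⟨x, hx, hxt⟩ := (hasSubgaussianRounding_of_mem_span L v (gramSchmidt ℝ v) hvL
    (sub_gramSchmidt_mem_span v) t ht).exists_forall_abs_le (EuclideanSpace.projₗ ·)
    (half_pos hr) hV
  refine ⟨x, hx, fun j => (hxt j).trans ?_⟩
  have h2n : log (2 * n) ≤ 2 * log n := by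
    rw [log_mul two_ne_zero (by positivity)]
    linarith [log_le_log two_pos hn']
  calc r / 2 * √(2 * log (2 * Fintype.card (Fin n))) ≤ r / 2 * √(2 ^ 2 * log n) := by
        rw [Fintype.card_fin]
        exact mul_le_mul_of_nonneg_left (sqrt_le_sqrt (by linarith)) (by positivity)
    _ = √(log n) * r := by
        rw [sqrt_mul (by positivity), sqrt_sq two_pos.le]
        ring

end Lattice

theorem stmt_11 :
    ∃ C : ℝ, 0 < C ∧ ∀ n : ℕ, 2 ≤ n →
      ∀ b : Fin n → EuclideanSpace ℝ (Fin n), LinearIndependent ℝ b →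
        covRad n (AddSubgroup.closure (Set.range b))
            {x : EuclideanSpace ℝ (Fin n) | ∀ i, |x i| ≤ 1} ≤
          C * Real.sqrt (Real.log n) *
            nthMin n (AddSubgroup.closure (Set.range b)) (Metric.closedBall 0 1) := by
  refine ⟨1, one_pos, fun n hn b hb => ?_⟩
  set L := AddSubgroup.closure (Set.range b)
  have hbL (i : Fin n) : b i ∈ L := AddSubgroup.subset_closure ⟨i, rfl⟩
  have hlog : 0 < √(log n) := sqrt_pos.2 (log_pos (Nat.one_lt_cast.2 hn))
  rw [one_mul, ← div_le_iff₀' hlog]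
  refine le_csInf (exists_finrank_span_inter_smul_closedBall_eq hb hbL) fun r ⟨hr, hrank⟩ => ?_
  obtain ⟨v, hv, hvs⟩ := exists_linearIndependent_fin_of_finrank_span_eq hrank
  rw [div_le_iff₀' hlog]
  refine covRad_cube_le_sqrt_log_mul hn hv (fun i => (hvs i).1) hr fun i => ?_
  simpa [smul_unitClosedBall_of_nonneg hr.le] using (hvs i).2
end
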